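/- Let t > -1 and s ∈ [0,1], and let z₁, z₂ ∈ ℝ^{N×n} with s + |z₁| + |z₂| > 0. Then the integral ∫₀¹ (s² + |z₁ + λ(z₂ - z₁)|²)^{t/2} dλ is comparable, up to multiplicative constants depending only on n, N, t, to (s² + |z₁|² + |z₂|²)^{t/2}. -/
import Mathlib

open Real Set MeasureTheory

private lemma ae_ne_point (a : ℝ) : ∀ᵐ x : ℝ ∂volume, x ≠ a := by
  rw [MeasureTheory.ae_iff]
  simpa [not_not, Set.setOf_eq_eq_singleton] using MeasureTheory.measure_singleton a (μ := volume)

private lemma base_lemma {t : ℝ} (ht : -1 < t) (ht0 : t < 0)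
    {s b c : ℝ} (hs : 0 ≤ s) (hb : 0 ≤ b) (hpos : 0 < s ^ 2 + b ^ 2)
    (hc0 : 0 ≤ c) (hc1 : c ≤ 1) :
    IntervalIntegrable (fun u => (s ^ 2 + b ^ 2 * u ^ 2) ^ (t / 2)) volume 0 c ∧
      (∫ u in (0:ℝ)..c, (s ^ 2 + b ^ 2 * u ^ 2) ^ (t / 2)) ≤
        (s ^ 2 + b ^ 2) ^ (t / 2) / (t + 1) := by
  set K := (s ^ 2 + b ^ 2) ^ (t / 2) with hK
  have hK0 : 0 < K := Real.rpow_pos_of_pos hpos _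
  have ht1 : 0 < t + 1 := by linarith
  have hgint : IntervalIntegrable (fun u : ℝ => K * u ^ t) volume 0 c :=
    (intervalIntegral.intervalIntegrable_rpow' ht).const_mul K
  have hbound : ∀ u : ℝ, 0 < u → u ≤ 1 →
      (s ^ 2 + b ^ 2 * u ^ 2) ^ (t / 2) ≤ K * u ^ t := by
    intro u hu hu1
    have h1 : 0 < (s ^ 2 + b ^ 2) * u ^ 2 := by positivity
    have hu2 : u ^ 2 ≤ 1 := by nlinarith
    have h2 : (s ^ 2 + b ^ 2) * u ^ 2 ≤ s ^ 2 + b ^ 2 * u ^ 2 := by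
      nlinarith [mul_nonneg (sq_nonneg s) (by linarith : (0:ℝ) ≤ 1 - u ^ 2)]
    calc (s ^ 2 + b ^ 2 * u ^ 2) ^ (t / 2)
        ≤ ((s ^ 2 + b ^ 2) * u ^ 2) ^ (t / 2) :=
          Real.rpow_le_rpow_of_nonpos h1 h2 (by linarith : t / 2 ≤ 0)
      _ = K * (u ^ 2) ^ (t / 2) := Real.mul_rpow hpos.le (by positivity)
      _ = K * u ^ t := by
          rw [← Real.rpow_natCast u 2, ← Real.rpow_mul hu.le]
          congr 1
          push_cast
          ring
  have hmeas : AEStronglyMeasurable (fun u : ℝ => (s ^ 2 + b ^ 2 * u ^ 2) ^ (t / 2))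
      (volume.restrict (Set.uIoc (0:ℝ) c)) := by
    apply Measurable.aestronglyMeasurable
    measurability
  have hfint : IntervalIntegrable (fun u : ℝ => (s ^ 2 + b ^ 2 * u ^ 2) ^ (t / 2)) volume 0 c := by
    apply hgint.mono_fun hmeas
    filter_upwards [MeasureTheory.ae_restrict_mem measurableSet_uIoc] with u hu
    rw [Set.uIoc_of_le hc0] at hu
    rw [Real.norm_eq_abs, abs_of_nonneg (Real.rpow_nonneg (by positivity) _)]
    exact (hbound u hu.1 (hu.2.trans hc1)).trans (le_abs_self _)
  refine ⟨hfint, ?_⟩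
  have hint2 : (∫ u in (0:ℝ)..c, (s ^ 2 + b ^ 2 * u ^ 2) ^ (t / 2)) ≤
      ∫ u in (0:ℝ)..c, K * u ^ t := by
    apply intervalIntegral.integral_mono_ae_restrict hc0 hfint hgint
    have hne : ∀ᵐ u ∂(volume.restrict (Set.Icc (0:ℝ) c)), u ≠ 0 :=
      (ae_ne_point 0).filter_mono (MeasureTheory.ae_mono Measure.restrict_le_self)
    filter_upwards [MeasureTheory.ae_restrict_mem measurableSet_Icc, hne] with u hu hu0
    exact hbound u (lt_of_le_of_ne hu.1 (Ne.symm hu0)) (hu.2.trans hc1)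
  refine hint2.trans ?_
  rw [intervalIntegral.integral_const_mul, integral_rpow (Or.inl ht),
    Real.zero_rpow (by linarith : t + 1 ≠ 0), sub_zero]
  have hc : c ^ (t + 1) ≤ 1 := Real.rpow_le_one hc0 hc1 ht1.le
  have h4 : c ^ (t + 1) / (t + 1) ≤ 1 / (t + 1) := by gcongr
  calc K * (c ^ (t + 1) / (t + 1)) ≤ K * (1 / (t + 1)) :=
        mul_le_mul_of_nonneg_left h4 hK0.le
    _ = K / (t + 1) := by ring

private lemma shifted_lemma0 {t : ℝ} (ht : -1 < t) (ht0 : t < 0)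
    {s b l₀ : ℝ} (hs : 0 ≤ s) (hb : 0 ≤ b) (hpos : 0 < s ^ 2 + b ^ 2)
    (hl0 : 0 ≤ l₀) (hl1 : l₀ ≤ 1)
    (base_lemma : ∀ c : ℝ, 0 ≤ c → c ≤ 1 →
      IntervalIntegrable (fun u => (s ^ 2 + b ^ 2 * u ^ 2) ^ (t / 2)) volume 0 c ∧
      (∫ u in (0:ℝ)..c, (s ^ 2 + b ^ 2 * u ^ 2) ^ (t / 2)) ≤
        (s ^ 2 + b ^ 2) ^ (t / 2) / (t + 1)) :
    IntervalIntegrable (fun l => (s ^ 2 + b ^ 2 * (l - l₀) ^ 2) ^ (t / 2)) volume 0 1 ∧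
      (∫ l in (0:ℝ)..1, (s ^ 2 + b ^ 2 * (l - l₀) ^ 2) ^ (t / 2)) ≤
        2 * (s ^ 2 + b ^ 2) ^ (t / 2) / (t + 1) := by
  set g : ℝ → ℝ := fun u => (s ^ 2 + b ^ 2 * u ^ 2) ^ (t / 2) with hg
  obtain ⟨hI1, hB1⟩ := base_lemma l₀ hl0 hl1
  obtain ⟨hI2, hB2⟩ := base_lemma (1 - l₀) (by linarith) (by linarith)
  -- integrability on [l₀, 1]
  have hR : IntervalIntegrable (fun l => g (l - l₀)) volume l₀ 1 := by
    have := hI2.comp_sub_right l₀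
    simpa using this
  -- integrability on [0, l₀]
  have hL : IntervalIntegrable (fun l => g (l - l₀)) volume 0 l₀ := by
    have h1 := (hI1.comp_sub_left l₀)
    have h2 : IntervalIntegrable (fun x => g (l₀ - x)) volume 0 l₀ := by
      simpa using h1.symm
    have hfun : (fun x : ℝ => g (l₀ - x)) = fun x : ℝ => g (x - l₀) := by
      funext x
      simp only [hg]
      congr 1
      ring
    rwa [hfun] at h2
  refine ⟨hL.trans hR, ?_⟩
  rw [← intervalIntegral.integral_add_adjacent_intervals hL hR]
  have e1 : (∫ l in (0:ℝ)..l₀, g (l - l₀)) = ∫ u in (0:ℝ)..l₀, g u := by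
    have hfun : (fun x : ℝ => g (x - l₀)) = fun x : ℝ => g (l₀ - x) := by
      funext x; simp only [hg]; congr 1; ring
    rw [hfun, intervalIntegral.integral_comp_sub_left g l₀]
    simp
  have e2 : (∫ l in l₀..(1:ℝ), g (l - l₀)) = ∫ u in (0:ℝ)..(1 - l₀), g u := by
    rw [intervalIntegral.integral_comp_sub_right g l₀]
    simp
  rw [e1, e2]
  calc (∫ u in (0:ℝ)..l₀, g u) + ∫ u in (0:ℝ)..(1 - l₀), g u
      ≤ (s ^ 2 + b ^ 2) ^ (t / 2) / (t + 1) + (s ^ 2 + b ^ 2) ^ (t / 2) / (t + 1) :=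
        add_le_add hB1 hB2
    _ = 2 * (s ^ 2 + b ^ 2) ^ (t / 2) / (t + 1) := by ring

section helpers
variable {E : Type*} [NormedAddCommGroup E] [NormedSpace ℝ E]

private lemma affine_rw (z₁ z₂ : E) (l : ℝ) :
    z₁ + l • (z₂ - z₁) = (1 - l) • z₁ + l • z₂ := by module

private lemma norm_affine_le (z₁ z₂ : E) {l : ℝ} (h0 : 0 ≤ l) (h1 : l ≤ 1) :
    ‖z₁ + l • (z₂ - z₁)‖ ≤ ‖z₁‖ + ‖z₂‖ := by
  rw [affine_rw]
  calc ‖(1 - l) • z₁ + l • z₂‖ ≤ ‖(1 - l) • z₁‖ + ‖l • z₂‖ := norm_add_le _ _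
    _ = (1 - l) * ‖z₁‖ + l * ‖z₂‖ := by
        rw [norm_smul, norm_smul, Real.norm_eq_abs, Real.norm_eq_abs,
          abs_of_nonneg (by linarith), abs_of_nonneg h0]
    _ ≤ ‖z₁‖ + ‖z₂‖ := by nlinarith [norm_nonneg z₁, norm_nonneg z₂]

private lemma norm_affine_ge (z₁ z₂ : E) {l : ℝ} (h0 : 0 ≤ l) (h1 : l ≤ 1) :
    |(1 - l) * ‖z₁‖ - l * ‖z₂‖| ≤ ‖z₁ + l • (z₂ - z₁)‖ := by
  rw [affine_rw]
  have h := abs_norm_sub_norm_le ((1 - l) • z₁) (-(l • z₂))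
  have e : (1 - l) • z₁ - -(l • z₂) = (1 - l) • z₁ + l • z₂ := by module
  rw [e, norm_neg, norm_smul, norm_smul, Real.norm_eq_abs, Real.norm_eq_abs,
    abs_of_nonneg (by linarith : (0:ℝ) ≤ 1 - l), abs_of_nonneg h0] at h
  exact h

private lemma quad_le (s : ℝ) (z₁ z₂ : E) {l : ℝ} (h0 : 0 ≤ l) (h1 : l ≤ 1) :
    s ^ 2 + ‖z₁ + l • (z₂ - z₁)‖ ^ 2 ≤ 2 * (s ^ 2 + ‖z₁‖ ^ 2 + ‖z₂‖ ^ 2) := by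
  have h := norm_affine_le z₁ z₂ h0 h1
  have h2 : ‖z₁ + l • (z₂ - z₁)‖ ^ 2 ≤ (‖z₁‖ + ‖z₂‖) ^ 2 :=
    pow_le_pow_left₀ (norm_nonneg _) h 2
  nlinarith [sq_nonneg (‖z₁‖ - ‖z₂‖), sq_nonneg s]

private lemma good_interval (s : ℝ) (hs : 0 ≤ s) (z₁ z₂ : E) :
    ∃ u : ℝ, 0 ≤ u ∧ u + 4⁻¹ ≤ 1 ∧ ∀ l ∈ Icc u (u + 4⁻¹),
      (s ^ 2 + ‖z₁‖ ^ 2 + ‖z₂‖ ^ 2) / 8 ≤ s ^ 2 + ‖z₁ + l • (z₂ - z₁)‖ ^ 2 := by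
  rcases le_total ‖z₁‖ ‖z₂‖ with hAB | hAB
  · refine ⟨3 / 4, by norm_num, by norm_num, ?_⟩
    rintro l ⟨hl0, hl1⟩
    have hl0' : (0:ℝ) ≤ l := by linarith
    have hl1' : l ≤ 1 := by linarith
    have h := norm_affine_ge z₁ z₂ hl0' hl1'
    have h2 : l * ‖z₂‖ - (1 - l) * ‖z₁‖ ≤ ‖z₁ + l • (z₂ - z₁)‖ := by
      calc l * ‖z₂‖ - (1 - l) * ‖z₁‖ ≤ |(1 - l) * ‖z₁‖ - l * ‖z₂‖| := by
            rw [abs_sub_comm]; exact le_abs_self _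
        _ ≤ _ := h
    have h3 : ‖z₂‖ / 2 ≤ ‖z₁ + l • (z₂ - z₁)‖ := by
      nlinarith [norm_nonneg z₁, norm_nonneg z₂]
    have h4 : (‖z₂‖ / 2) ^ 2 ≤ ‖z₁ + l • (z₂ - z₁)‖ ^ 2 :=
      pow_le_pow_left₀ (by positivity) h3 2
    have h5 : ‖z₁‖ ^ 2 ≤ ‖z₂‖ ^ 2 := pow_le_pow_left₀ (norm_nonneg _) hAB 2
    nlinarith [sq_nonneg s]
  · refine ⟨0, le_refl _, by norm_num, ?_⟩
    rintro l ⟨hl0, hl1⟩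
    have hl1' : l ≤ 1 := by linarith
    have h := norm_affine_ge z₁ z₂ hl0 hl1'
    have h2 : (1 - l) * ‖z₁‖ - l * ‖z₂‖ ≤ ‖z₁ + l • (z₂ - z₁)‖ :=
      (le_abs_self _).trans h
    have h3 : ‖z₁‖ / 2 ≤ ‖z₁ + l • (z₂ - z₁)‖ := by
      nlinarith [norm_nonneg z₁, norm_nonneg z₂]
    have h4 : (‖z₁‖ / 2) ^ 2 ≤ ‖z₁ + l • (z₂ - z₁)‖ ^ 2 :=
      pow_le_pow_left₀ (by positivity) h3 2
    have h5 : ‖z₂‖ ^ 2 ≤ ‖z₁‖ ^ 2 := pow_le_pow_left₀ (norm_nonneg _) hAB 2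
    nlinarith [sq_nonneg s]

end helpers


set_option maxHeartbeats 1000000 in
/-- For t > -1, s ∈ [0,1] and matrices z₁, z₂ (identified with points of a Euclidean space
with the Frobenius norm) with s + |z₁| + |z₂| > 0, the integral
∫₀¹ (s² + |z₁ + λ(z₂-z₁)|²)^{t/2} dλ is comparable to (s² + |z₁|² + |z₂|²)^{t/2},
with constants depending only on n, N, t. -/
theorem integral_mean_comparability (n N : ℕ) (t : ℝ) (ht : -1 < t) :
    ∃ c₁ c₂ : ℝ, 0 < c₁ ∧ 0 < c₂ ∧
      ∀ s : ℝ, s ∈ Icc (0 : ℝ) 1 →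
      ∀ z₁ z₂ : EuclideanSpace ℝ (Fin N × Fin n),
        0 < s + ‖z₁‖ + ‖z₂‖ →
        c₁ * (s ^ 2 + ‖z₁‖ ^ 2 + ‖z₂‖ ^ 2) ^ (t / 2) ≤
          (∫ l in (0 : ℝ)..1, (s ^ 2 + ‖z₁ + l • (z₂ - z₁)‖ ^ 2) ^ (t / 2)) ∧
        (∫ l in (0 : ℝ)..1, (s ^ 2 + ‖z₁ + l • (z₂ - z₁)‖ ^ 2) ^ (t / 2)) ≤
          c₂ * (s ^ 2 + ‖z₁‖ ^ 2 + ‖z₂‖ ^ 2) ^ (t / 2) := by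
  rcases le_or_gt 0 t with htpos | htneg
  · -- nonnegative exponent
    refine ⟨(1 / 4) * (1 / 8) ^ (t / 2), 2 ^ (t / 2), by positivity, by positivity, ?_⟩
    rintro s ⟨hs0, hs1⟩ z₁ z₂ hpos
    set M := s ^ 2 + ‖z₁‖ ^ 2 + ‖z₂‖ ^ 2 with hM
    have hM0 : 0 < M := by
      have h3 : 0 < s ∨ 0 < ‖z₁‖ ∨ 0 < ‖z₂‖ := by
        by_contra hcon
        push_neg at hcon
        obtain ⟨h1, h2, h3⟩ := hcon
        have := norm_nonneg z₁; have := norm_nonneg z₂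
        linarith
      rcases h3 with h | h | h
      · nlinarith [sq_nonneg ‖z₁‖, sq_nonneg ‖z₂‖]
      · nlinarith [sq_nonneg s, sq_nonneg ‖z₂‖]
      · nlinarith [sq_nonneg s, sq_nonneg ‖z₁‖]
    set F : ℝ → ℝ := fun l => (s ^ 2 + ‖z₁ + l • (z₂ - z₁)‖ ^ 2) ^ (t / 2) with hF
    have hcont : Continuous F := by
      apply Continuous.rpow_const
      · fun_prop
      · intro x; right; positivity
    have hFint : IntervalIntegrable F volume 0 1 := hcont.intervalIntegrable 0 1
    constructor
    · obtain ⟨u, hu0, hu1, hJ⟩ := good_interval s hs0 z₁ z₂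
      have hsub : IntervalIntegrable F volume u (u + 4⁻¹) :=
        hcont.intervalIntegrable _ _
      have h1 : (∫ _ in u..(u + 4⁻¹), (M / 8) ^ (t / 2)) ≤ ∫ l in u..(u + 4⁻¹), F l := by
        apply intervalIntegral.integral_mono_on (by linarith) intervalIntegrable_const hsub
        intro x hx
        exact Real.rpow_le_rpow (by positivity) (hJ x hx) (by positivity)
      have h2 : (∫ l in u..(u + 4⁻¹), F l) ≤ ∫ l in (0:ℝ)..1, F l := by
        apply intervalIntegral.integral_mono_interval hu0 (by linarith) hu1
        · exact Filter.Eventually.of_forall fun x => Real.rpow_nonneg (by positivity) _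
        · exact hFint
      rw [intervalIntegral.integral_const, smul_eq_mul] at h1
      have e : u + 4⁻¹ - u = 4⁻¹ := by ring
      rw [e] at h1
      have e2 : (M / 8) ^ (t / 2) = (1 / 8) ^ (t / 2) * M ^ (t / 2) := by
        rw [div_eq_mul_one_div M 8, mul_comm M, Real.mul_rpow (by norm_num) hM0.le]
      calc (1 / 4) * (1 / 8) ^ (t / 2) * M ^ (t / 2) = 4⁻¹ * (M / 8) ^ (t / 2) := by
            rw [e2]; ring
        _ ≤ ∫ l in u..(u + 4⁻¹), F l := h1
        _ ≤ _ := h2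
    · have h1 : (∫ l in (0:ℝ)..1, F l) ≤ ∫ _ in (0:ℝ)..1, (2 * M) ^ (t / 2) := by
        apply intervalIntegral.integral_mono_on zero_le_one hFint intervalIntegrable_const
        intro x hx
        exact Real.rpow_le_rpow (by positivity) (quad_le s z₁ z₂ hx.1 hx.2) (by positivity)
      rw [intervalIntegral.integral_const, smul_eq_mul] at h1
      calc (∫ l in (0:ℝ)..1, F l) ≤ (1 - 0) * (2 * M) ^ (t / 2) := h1
        _ = 2 ^ (t / 2) * M ^ (t / 2) := by
            rw [Real.mul_rpow (by norm_num) hM0.le]; ring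
  · -- negative exponent
    refine ⟨4⁻¹ * 2 ^ (t / 2), 2 / (t + 1), by positivity, div_pos two_pos (by linarith), ?_⟩
    rintro s ⟨hs0, hs1⟩ z₁ z₂ hpos
    have ht1 : 0 < t + 1 := by linarith
    set M := s ^ 2 + ‖z₁‖ ^ 2 + ‖z₂‖ ^ 2 with hM
    have hM0 : 0 < M := by
      have h3 : 0 < s ∨ 0 < ‖z₁‖ ∨ 0 < ‖z₂‖ := by
        by_contra hcon
        push_neg at hcon
        obtain ⟨h1, h2, h3⟩ := hcon
        have := norm_nonneg z₁; have := norm_nonneg z₂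
        linarith
      rcases h3 with h | h | h
      · nlinarith [sq_nonneg ‖z₁‖, sq_nonneg ‖z₂‖]
      · nlinarith [sq_nonneg s, sq_nonneg ‖z₂‖]
      · nlinarith [sq_nonneg s, sq_nonneg ‖z₁‖]
    set F : ℝ → ℝ := fun l => (s ^ 2 + ‖z₁ + l • (z₂ - z₁)‖ ^ 2) ^ (t / 2) with hF
    have hnonnegF : ∀ l : ℝ, 0 ≤ F l := fun l => Real.rpow_nonneg (by positivity) _
    have hmF : Measurable F := by
      have h1 : Measurable fun x : ℝ => x ^ (t / 2) := by measurability
      have h2 : Continuous fun l : ℝ => s ^ 2 + ‖z₁ + l • (z₂ - z₁)‖ ^ 2 := by fun_prop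
      exact h1.comp h2.measurable
    -- integrability and upper bound
    have key : IntervalIntegrable F volume 0 1 ∧
        (∫ l in (0:ℝ)..1, F l) ≤ 2 / (t + 1) * M ^ (t / 2) := by
      rcases eq_or_lt_of_le (add_nonneg (norm_nonneg z₁) (norm_nonneg z₂)) with hb0 | hb0
      · -- z₁ = z₂ = 0
        have hA : ‖z₁‖ = 0 ∧ ‖z₂‖ = 0 :=
          (add_eq_zero_iff_of_nonneg (norm_nonneg _) (norm_nonneg _)).mp hb0.symm
        have hz1 : z₁ = 0 := norm_eq_zero.mp hA.1
        have hz2 : z₂ = 0 := norm_eq_zero.mp hA.2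
        have hFeq : F = fun _ => (s ^ 2) ^ (t / 2) := by
          funext l
          simp [hF, hz1, hz2]
        have hMeq : M = s ^ 2 := by rw [hM, hA.1, hA.2]; ring
        constructor
        · rw [hFeq]; exact intervalIntegrable_const
        · rw [hFeq, intervalIntegral.integral_const, smul_eq_mul, hMeq]
          have hcoef : (1:ℝ) ≤ 2 / (t + 1) := by
            rw [le_div_iff₀ ht1]; linarith
          nlinarith [Real.rpow_nonneg (sq_nonneg s) (t / 2)]
      · -- b > 0
        set b := ‖z₁‖ + ‖z₂‖ with hb
        set l₀ := ‖z₁‖ / b with hl₀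
        have hl₀0 : 0 ≤ l₀ := div_nonneg (norm_nonneg _) hb0.le
        have hl₀1 : l₀ ≤ 1 := by
          rw [hl₀, div_le_one hb0]
          have := norm_nonneg z₂; rw [hb]; linarith
        have hsb : 0 < s ^ 2 + b ^ 2 := by positivity
        obtain ⟨hGint, hGbd⟩ := shifted_lemma0 ht htneg hs0 hb0.le hsb hl₀0 hl₀1
          (fun c hc0 hc1 => base_lemma ht htneg hs0 hb0.le hsb hc0 hc1)
        set G : ℝ → ℝ := fun l => (s ^ 2 + b ^ 2 * (l - l₀) ^ 2) ^ (t / 2) with hG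
        have hFG : ∀ l : ℝ, 0 ≤ l → l ≤ 1 → l ≠ l₀ → F l ≤ G l := by
          intro l h0 h1 hne
          have hx : 0 < s ^ 2 + b ^ 2 * (l - l₀) ^ 2 := by
            have h' : l - l₀ ≠ 0 := sub_ne_zero.mpr hne
            have h'' : 0 < (l - l₀) ^ 2 := by positivity
            nlinarith [sq_nonneg s, mul_pos (mul_pos hb0 hb0) h'']
          have key2 : s ^ 2 + b ^ 2 * (l - l₀) ^ 2 ≤ s ^ 2 + ‖z₁ + l • (z₂ - z₁)‖ ^ 2 := by
            have habs := norm_affine_ge z₁ z₂ h0 h1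
            have hsq : ((1 - l) * ‖z₁‖ - l * ‖z₂‖) ^ 2 ≤ ‖z₁ + l • (z₂ - z₁)‖ ^ 2 := by
              calc ((1 - l) * ‖z₁‖ - l * ‖z₂‖) ^ 2
                  = |(1 - l) * ‖z₁‖ - l * ‖z₂‖| ^ 2 := (sq_abs _).symm
                _ ≤ _ := pow_le_pow_left₀ (abs_nonneg _) habs 2
            have hexp : b ^ 2 * (l - l₀) ^ 2 = ((1 - l) * ‖z₁‖ - l * ‖z₂‖) ^ 2 := by
              rw [hl₀, hb]
              have hbne : ‖z₁‖ + ‖z₂‖ ≠ 0 := by rw [hb] at hb0; exact hb0.ne'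
              field_simp
              ring
            rw [hexp] at *
            linarith
          exact Real.rpow_le_rpow_of_nonpos hx key2 (by linarith)
        have hFint : IntervalIntegrable F volume 0 1 := by
          apply hGint.mono_fun hmF.aestronglyMeasurable
          have hne : ∀ᵐ l ∂(volume.restrict (Set.uIoc (0:ℝ) 1)), l ≠ l₀ :=
            (ae_ne_point l₀).filter_mono (MeasureTheory.ae_mono Measure.restrict_le_self)
          filter_upwards [MeasureTheory.ae_restrict_mem measurableSet_uIoc, hne] with l hl hlne
          rw [Set.uIoc_of_le zero_le_one] at hl
          rw [Real.norm_eq_abs, Real.norm_eq_abs, abs_of_nonneg (hnonnegF l),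
            abs_of_nonneg (Real.rpow_nonneg (by positivity) _)]
          exact hFG l hl.1.le hl.2 hlne
        refine ⟨hFint, ?_⟩
        have hmono : (∫ l in (0:ℝ)..1, F l) ≤ ∫ l in (0:ℝ)..1, G l := by
          apply intervalIntegral.integral_mono_ae_restrict zero_le_one hFint hGint
          have hne : ∀ᵐ l ∂(volume.restrict (Set.Icc (0:ℝ) 1)), l ≠ l₀ :=
            (ae_ne_point l₀).filter_mono (MeasureTheory.ae_mono Measure.restrict_le_self)
          filter_upwards [MeasureTheory.ae_restrict_mem measurableSet_Icc, hne] with l hl hlne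
          exact hFG l hl.1 hl.2 hlne
        have hMle : M ≤ s ^ 2 + b ^ 2 := by
          rw [hM, hb]
          nlinarith [mul_nonneg (norm_nonneg z₁) (norm_nonneg z₂)]
        have hr : (s ^ 2 + b ^ 2) ^ (t / 2) ≤ M ^ (t / 2) :=
          Real.rpow_le_rpow_of_nonpos hM0 hMle (by linarith)
        calc (∫ l in (0:ℝ)..1, F l) ≤ ∫ l in (0:ℝ)..1, G l := hmono
          _ ≤ 2 * (s ^ 2 + b ^ 2) ^ (t / 2) / (t + 1) := hGbd
          _ ≤ 2 * M ^ (t / 2) / (t + 1) := by gcongr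
          _ = 2 / (t + 1) * M ^ (t / 2) := by ring
    obtain ⟨hFint, hupper⟩ := key
    refine ⟨?_, hupper⟩
    -- lower bound
    obtain ⟨u, hu0, hu1, hJ⟩ := good_interval s hs0 z₁ z₂
    have hsub : IntervalIntegrable F volume u (u + 4⁻¹) := by
      apply hFint.mono_set
      rw [Set.uIcc_of_le (by linarith : u ≤ u + 4⁻¹), Set.uIcc_of_le zero_le_one]
      exact Set.Icc_subset_Icc hu0 hu1
    have h1 : (∫ _ in u..(u + 4⁻¹), (2 * M) ^ (t / 2)) ≤ ∫ l in u..(u + 4⁻¹), F l := by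
      apply intervalIntegral.integral_mono_on (by linarith) intervalIntegrable_const hsub
      intro x hx
      have hx0 : 0 ≤ x := le_trans hu0 hx.1
      have hx1 : x ≤ 1 := le_trans hx.2 hu1
      have hfpos : 0 < s ^ 2 + ‖z₁ + x • (z₂ - z₁)‖ ^ 2 := lt_of_lt_of_le (by positivity) (hJ x hx)
      exact Real.rpow_le_rpow_of_nonpos hfpos (quad_le s z₁ z₂ hx0 hx1) (by linarith)
    have h2 : (∫ l in u..(u + 4⁻¹), F l) ≤ ∫ l in (0:ℝ)..1, F l := by
      apply intervalIntegral.integral_mono_interval hu0 (by linarith) hu1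
      · exact Filter.Eventually.of_forall fun x => hnonnegF x
      · exact hFint
    rw [intervalIntegral.integral_const, smul_eq_mul] at h1
    have e : u + 4⁻¹ - u = 4⁻¹ := by ring
    rw [e] at h1
    calc 4⁻¹ * 2 ^ (t / 2) * M ^ (t / 2) = 4⁻¹ * (2 * M) ^ (t / 2) := by
          rw [Real.mul_rpow (by norm_num) hM0.le]; ring
      _ ≤ ∫ l in u..(u + 4⁻¹), F l := h1
      _ ≤ _ := h2
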